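/- If a state h has win-label (L, ·, ·) (the adversary wins the game for F1 from h) and the adversary plays a strategy whose support lies in its safe actions for the game over F1 (actions keeping the play in the adversary's winning region Win_E(F1)), then with probability one the play never reaches F1; in particular the robot cannot satisfy φ1 and hence cannot satisfy φ = φ1 ∧ φ2. -/
import Mathlib


/-!
Finite two-player turn-based reachability game on states `H` with
deterministic transitions `Δ` and target `F1`.  The adversary winning
region `Win_E(F1)` is the complement of the attractor `Attr*(F1)`.
A state with win-label `(L,·,·)` is one outside `Attr*(F1)`.
-/

/-- The attractor sequence: `Attr turn Δ F 0 = F` and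
`Attr turn Δ F (k+1)` adds robot states with some action into level `k`
and adversary states with all actions into level `k`. -/
def Attr {G Act : Type} (turn : G → Bool) (Δ : G → Act → G) (F : Set G) : ℕ → Set G
  | 0 => F
  | k + 1 =>
      Attr turn Δ F k ∪
        {g | turn g = true ∧ ∃ a, Δ g a ∈ Attr turn Δ F k} ∪
        {g | turn g = false ∧ ∀ a, Δ g a ∈ Attr turn Δ F k}

/-- The attractor `Attr*(F)`. -/
def AttrStar {G Act : Type} (turn : G → Bool) (Δ : G → Act → G) (F : Set G) : Set G :=
  ⋃ k, Attr turn Δ F k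

/-- If `h` has win-label `(L,·,·)` (i.e.
`h ∉ Attr*(F1)`, the adversary wins the game for `F1` from `h`) and the
adversary plays a strategy `σ` whose support lies in its safe actions
(actions keeping the play inside `Win_E(F1) = (Attr*(F1))ᶜ`), then with
probability one — i.e. along every play in which the adversary only uses
actions of positive probability — the play never reaches `F1`; in
particular the robot cannot satisfy `φ1` and hence cannot satisfy
`φ = φ1 ∧ φ2` (target `F1 ∩ F2`). -/
theorem adversary_safe_strategy_prevents {H Act : Type} [Finite H]
    (turn : H → Bool) (Δ : H → Act → H) (F1 F2 : Set H)
    (σ : H → Act → ℝ)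
    (hsafe : ∀ h, h ∉ AttrStar turn Δ F1 → turn h = false →
      ∀ a, 0 < σ h a → Δ h a ∉ AttrStar turn Δ F1)
    (ρ : ℕ → H)
    (hrun : ∀ n,
      (turn (ρ n) = true → ∃ a, ρ (n + 1) = Δ (ρ n) a) ∧
      (turn (ρ n) = false →
        ∃ a, 0 < σ (ρ n) a ∧ ρ (n + 1) = Δ (ρ n) a))
    (h0 : ρ 0 ∉ AttrStar turn Δ F1) :
    ∀ n, ρ n ∉ F1 ∧ ρ n ∉ F1 ∩ F2 := by
  have key : ∀ n, ρ n ∉ AttrStar turn Δ F1 := by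
    intro n
    induction n with
    | zero => exact h0
    | succ n ih =>
      rcases hrun n with ⟨hr, ha⟩
      cases hturn : turn (ρ n) with
      | true =>
        obtain ⟨a, hstep⟩ := hr hturn
        rw [hstep]
        intro hmem
        obtain ⟨k, hk⟩ := Set.mem_iUnion.mp hmem
        exact ih (Set.mem_iUnion.mpr ⟨k + 1, Or.inl (Or.inr ⟨hturn, a, hk⟩)⟩)
      | false =>
        obtain ⟨a, hpos, hstep⟩ := ha hturn
        rw [hstep]
        exact hsafe (ρ n) ih hturn a hpos
  intro n
  have hF1 : ρ n ∉ F1 := fun hmem =>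
    key n (Set.mem_iUnion.mpr ⟨0, hmem⟩)
  exact ⟨hF1, fun hmem => hF1 hmem.1⟩
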